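/- arXiv:1910.03147 — 5 statements merged into one kernel-verified Lean document; each statement's English description precedes it below -/
import Mathlib

section
/- Let k be a field, V a finite-dimensional k-vector space, and H a finite group acting linearly on V. If x, y, z ∈ H generate H and satisfy x·y·z = 1, then dim V + dim V^H + dim (V*)^H ≥ dim V^x + dim V^y + dim V^z, where V^g denotes the subspace of vectors fixed by g and V* the dual representation. -/
/-!
Write `a = ρ x`, `b = ρ y`, `c = ρ z`, so `a b c = 1`. The map `F (p, q) = (a - 1) p + (b - 1) q`
has range `W = (a - 1) V + (b - 1) V`, and `W^⊥` consists of the functionals fixed by `x` and `y`,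
hence by `z = (x y)⁻¹` and so by all of `H`. Thus
`dim ker F = dim V + dim W^⊥ ≤ dim V + dim (V*)^H`.
For `w ∈ V^z` we have `a b w = w`, so `Θ (u, v, w) = (u + b w, v + w)` maps `V^x × V^y × V^z`
into `ker F`, and its kernel consists of the `(-w, -w, w)` with `w` fixed by `x`, `y`, `z`, i.e.
`w ∈ V^H`. Rank–nullity for `Θ` gives the inequality.
-/

open Module LinearMap Submodule

namespace Module.End

theorem mem_ker_sub_one {R V : Type*} [Ring R] [AddCommGroup V] [Module R V]
    {a : Module.End R V} {v : V} : v ∈ ker (a - 1) ↔ a v = v := by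
  rw [mem_ker, LinearMap.sub_apply, one_apply, sub_eq_zero]

section CommRing

variable {R V : Type*} [CommRing R] [AddCommGroup V] [Module R V]

theorem dualMap_sub_one (a : Module.End R V) : (a - 1).dualMap = a.dualMap - 1 := by
  ext f v
  simp

theorem ker_dualMap_sub_one (a : Module.End R V) :
    ker (a.dualMap - 1) = (range (a - 1)).dualAnnihilator := by
  rw [← dualMap_sub_one, ker_dualMap_eq_dualAnnihilator_range]

theorem ker_dualMap_sub_one_inf_le (a b c : Module.End R V) (habc : a * b * c = 1) :
    ker (a.dualMap - 1) ⊓ ker (b.dualMap - 1) ≤ ker (c.dualMap - 1) := by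
  intro f hf
  obtain ⟨ha, hb⟩ : a.dualMap f = f ∧ b.dualMap f = f := by
    simpa only [mem_inf, mem_ker_sub_one] using hf
  rw [mem_ker_sub_one]
  ext v
  calc f (c v) = b.dualMap (a.dualMap f) (c v) := by rw [ha, hb]
    _ = f v := by simpa using congr(f ($habc v))

end CommRing

variable {k V : Type*} [Field k] [AddCommGroup V] [Module k V] [FiniteDimensional k V]

theorem finrank_ker_coprod_sub_one (a b : Module.End k V) :
    finrank k (ker ((a - 1).coprod (b - 1))) =
      finrank k V + finrank k ↥(ker (a.dualMap - 1) ⊓ ker (b.dualMap - 1)) := by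
  have hrank := finrank_range_add_finrank_ker ((a - 1).coprod (b - 1))
  have hann := Subspace.finrank_add_finrank_dualAnnihilator_eq (range ((a - 1).coprod (b - 1)))
  rw [range_coprod, dualAnnihilator_sup_eq, ← ker_dualMap_sub_one, ← ker_dualMap_sub_one]
    at hann
  rw [finrank_prod, range_coprod] at hrank
  omega

theorem finrank_ker_sub_one_add_le_finrank_ker_coprod (a b c : Module.End k V)
    (habc : a * b * c = 1) :
    finrank k (ker (a - 1)) + finrank k (ker (b - 1)) + finrank k (ker (c - 1)) ≤
      finrank k (ker ((a - 1).coprod (b - 1))) +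
        finrank k ↥(ker (a - 1) ⊓ ker (b - 1) ⊓ ker (c - 1)) := by
  have hab : ∀ w ∈ ker (c - 1), a (b w) = w := fun w hw => by
    conv_lhs => rw [← mem_ker_sub_one.mp hw]
    simpa using congr($habc w)
  set Vx := ker (a - 1)
  set Vy := ker (b - 1)
  set Vz := ker (c - 1)
  let Θ : Vx × Vy × Vz →ₗ[k] V × V :=
    (inl k V V ∘ₗ Vx.subtype).coprod
      ((inr k V V ∘ₗ Vy.subtype).coprod ((b.prod 1) ∘ₗ Vz.subtype))
  let e : ↥(Vx ⊓ Vy ⊓ Vz) →ₗ[k] Vx × Vy × Vz :=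
    (-inclusion (inf_le_left.trans inf_le_left)).prod
      ((-inclusion (inf_le_left.trans inf_le_right)).prod (inclusion inf_le_right))
  have hrange : range Θ ≤ ker ((a - 1).coprod (b - 1)) := by
    rintro _ ⟨⟨u, v, w⟩, rfl⟩
    have hu : a u = u := mem_ker_sub_one.mp u.2
    have hv : b v = v := mem_ker_sub_one.mp v.2
    simp [Θ, hu, hv, hab w w.2]
  have hker : ker Θ ≤ range e := by
    rintro ⟨u, v, w⟩ h
    obtain ⟨hu, hv⟩ : (u : V) + b w = 0 ∧ (v : V) + w = 0 := by simpa [Θ] using h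
    have hwv : (w : V) = -v := eq_neg_of_add_eq_zero_right hv
    have hwy : (w : V) ∈ Vy := hwv ▸ neg_mem v.2
    have hwu : (w : V) = -u := by
      rw [mem_ker_sub_one.mp hwy] at hu
      exact eq_neg_of_add_eq_zero_right hu
    have hwx : (w : V) ∈ Vx := hwu ▸ neg_mem u.2
    refine ⟨⟨w, ⟨hwx, hwy⟩, w.2⟩, ?_⟩
    ext
    · simp [e, hwu]
    · simp [e, hwv]
    · simp [e]
  calc finrank k Vx + finrank k Vy + finrank k Vz
      = finrank k (range Θ) + finrank k (ker Θ) := by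
        rw [finrank_range_add_finrank_ker, finrank_prod, finrank_prod, add_assoc]
    _ ≤ _ := add_le_add (finrank_mono hrange)
        ((finrank_mono hker).trans (finrank_range_le e))

theorem finrank_ker_sub_one_add_le (a b c : Module.End k V) (habc : a * b * c = 1) :
    finrank k (ker (a - 1)) + finrank k (ker (b - 1)) + finrank k (ker (c - 1)) ≤
      finrank k V + finrank k ↥(ker (a - 1) ⊓ ker (b - 1) ⊓ ker (c - 1)) +
        finrank k ↥(ker (a.dualMap - 1) ⊓ ker (b.dualMap - 1) ⊓ ker (c.dualMap - 1)) := by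
  rw [inf_eq_left.mpr (ker_dualMap_sub_one_inf_le a b c habc)]
  have := finrank_ker_sub_one_add_le_finrank_ker_coprod a b c habc
  rw [finrank_ker_coprod_sub_one] at this
  omega

end Module.End

theorem Representation.le_iInf_ker_sub_one_of_closure_eq_top {k V H : Type*} [Ring k]
    [AddCommGroup V] [Module k V] [Group H] (ρ : Representation k H V) {S : Set H}
    (hS : Subgroup.closure S = ⊤) {p : Submodule k V} (hp : ∀ s ∈ S, p ≤ ker (ρ s - 1)) :
    p ≤ ⨅ h : H, ker (ρ h - 1) := by
  intro v hv
  simp only [mem_iInf, Module.End.mem_ker_sub_one]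
  intro h
  induction hS ▸ Subgroup.mem_top h using Subgroup.closure_induction with
  | mem s hs => exact Module.End.mem_ker_sub_one.mp (hp s hs hv)
  | one => simp
  | mul g g' _ _ hg hg' => rw [map_mul, Module.End.mul_apply, hg', hg]
  | inv g _ hg =>
    calc ρ g⁻¹ v = ρ g⁻¹ (ρ g v) := by rw [hg]
      _ = v := ρ.inv_self_apply g v

theorem scott_lemma_general {k V H : Type*} [Field k] [AddCommGroup V] [Module k V]
    [FiniteDimensional k V] [Group H]
    (ρ : Representation k H V) (x y z : H)
    (hgen : Subgroup.closure ({x, y, z} : Set H) = ⊤) (hxyz : x * y * z = 1) :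
    Module.finrank k (LinearMap.ker (ρ x - LinearMap.id)) +
      Module.finrank k (LinearMap.ker (ρ y - LinearMap.id)) +
      Module.finrank k (LinearMap.ker (ρ z - LinearMap.id)) ≤
    Module.finrank k V +
      Module.finrank k ↥(⨅ h : H, LinearMap.ker (ρ h - LinearMap.id)) +
      Module.finrank k ↥(⨅ h : H, LinearMap.ker (ρ.dual h - LinearMap.id)) := by
  have hρ : ρ x * ρ y * ρ z = 1 := by rw [← map_mul, ← map_mul, hxyz, map_one]
  -- `ρ.dual s⁻¹` is the transpose of `ρ s`, so the dual side is controlled by the inverses.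
  have hgen_inv : Subgroup.closure ({x⁻¹, y⁻¹, z⁻¹} : Set H) = ⊤ := by
    simpa [Set.inv_insert] using (Subgroup.closure_inv ({x, y, z} : Set H)).trans hgen
  have hfix : ker (ρ x - 1) ⊓ ker (ρ y - 1) ⊓ ker (ρ z - 1) ≤ ⨅ h : H, ker (ρ h - 1) :=
    ρ.le_iInf_ker_sub_one_of_closure_eq_top hgen (by
      rintro s (rfl | rfl | rfl)
      exacts [inf_le_left.trans inf_le_left, inf_le_left.trans inf_le_right, inf_le_right])
  have hfix_dual :
      ker ((ρ x).dualMap - 1) ⊓ ker ((ρ y).dualMap - 1) ⊓ ker ((ρ z).dualMap - 1) ≤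
        ⨅ h : H, ker (ρ.dual h - 1) :=
    ρ.dual.le_iInf_ker_sub_one_of_closure_eq_top hgen_inv (by
      rintro s (rfl | rfl | rfl) <;> simp only [Representation.dual_apply, inv_inv]
      exacts [inf_le_left.trans inf_le_left, inf_le_left.trans inf_le_right, inf_le_right])
  calc _ ≤ _ := Module.End.finrank_ker_sub_one_add_le (ρ x) (ρ y) (ρ z) hρ
    _ ≤ _ := by gcongr <;> [exact finrank_mono hfix; exact finrank_mono hfix_dual]

/-- **Scott's lemma.** If `x, y, z` generate a finite group `H` acting linearly on a
finite-dimensional `k`-vector space `V` and `x * y * z = 1`, then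
`dim V + dim V^H + dim (V*)^H ≥ dim V^x + dim V^y + dim V^z`. -/
theorem scott_lemma {k V H : Type*} [Field k] [AddCommGroup V] [Module k V]
    [FiniteDimensional k V] [Group H] [Fintype H]
    (ρ : Representation k H V) (x y z : H)
    (hgen : Subgroup.closure ({x, y, z} : Set H) = ⊤) (hxyz : x * y * z = 1) :
    Module.finrank k (LinearMap.ker (ρ x - LinearMap.id)) +
      Module.finrank k (LinearMap.ker (ρ y - LinearMap.id)) +
      Module.finrank k (LinearMap.ker (ρ z - LinearMap.id)) ≤
    Module.finrank k V +
      Module.finrank k ↥(⨅ h : H, LinearMap.ker (ρ h - LinearMap.id)) +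
      Module.finrank k ↥(⨅ h : H, LinearMap.ker (ρ.dual h - LinearMap.id)) :=
  scott_lemma_general ρ x y z hgen hxyz
end

section
/- Let G be a finite group and N a minimal noncentral normal subgroup of G. If N is nilpotent and [N,N] ⊆ Z(G), then there is a prime r such that the image of N in G/Z(G) is an r-group. -/
/-- If `N` is a minimal noncentral normal subgroup of a finite group `G`, `N` is nilpotent and
`[N,N] ⊆ Z(G)`, then there is a prime `r` such that the image of `N` in `G/Z(G)` is an
`r`-group. -/
theorem minimal_noncentral_normal_is_primary {G : Type*} [Group G] [Finite G]
    (N : Subgroup G) (hN : N.Normal) (hnc : ¬ N ≤ Subgroup.center G)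
    (hmin : ∀ M : Subgroup G, M.Normal → M < N → M ≤ Subgroup.center G)
    (hnil : Group.IsNilpotent N) (hcomm : ⁅N, N⁆ ≤ Subgroup.center G) :
    ∃ r : ℕ, r.Prime ∧
      IsPGroup r (N.map (QuotientGroup.mk' (Subgroup.center G))) := by
  set π := QuotientGroup.mk' (Subgroup.center G) with hπ
  set M := N.map π with hM
  have hπsurj : Function.Surjective π := QuotientGroup.mk'_surjective _
  have hMnormal : M.Normal := hN.map π hπsurj
  -- M is abelian
  have hMab : ∀ x y : M, x * y = y * x := by
    have h1 : ⁅M, M⁆ = (⁅N, N⁆).map π := (Subgroup.map_commutator N N π).symm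
    have h2 : ⁅M, M⁆ = ⊥ := by
      rw [h1, Subgroup.map_eq_bot_iff, hπ, QuotientGroup.ker_mk']
      exact hcomm
    intro x y
    open scoped commutatorElement in
    have hmem : ⁅(x : G ⧸ Subgroup.center G), (y : G ⧸ Subgroup.center G)⁆ ∈ ⁅M, M⁆ :=
      Subgroup.commutator_mem_commutator x.2 y.2
    rw [h2, Subgroup.mem_bot, commutatorElement_eq_one_iff_mul_comm] at hmem
    exact Subtype.ext hmem
  -- key claim: every prime dividing card M gives M a q-group
  have key : ∀ q : ℕ, q.Prime → q ∣ Nat.card M → IsPGroup q M := by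
    intro q hq hdvd
    haveI : Fact q.Prime := ⟨hq⟩
    obtain ⟨S⟩ : Nonempty (Sylow q M) := inferInstance
    have hSnormalM : (S : Subgroup M).Normal := by
      constructor
      intro n hn g
      have : g * n * g⁻¹ = n := by rw [hMab g n, mul_assoc, mul_inv_cancel, mul_one]
      rwa [this]
    haveI : (S : Subgroup M).Characteristic := Sylow.characteristic_of_normal S hSnormalM
    have hSQ : ((S : Subgroup M).map M.subtype).Normal :=
      ConjAct.normal_of_characteristic_of_normal
    set K : Subgroup G := ((S : Subgroup M).map M.subtype).comap π with hK
    have hKnormal : K.Normal := hSQ.comap π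
    set L : Subgroup G := N ⊓ K with hL
    have hLnormal : L.Normal := Subgroup.normal_inf_normal N K
    have hLmap : L.map π = (S : Subgroup M).map M.subtype := by
      apply le_antisymm
      · intro x hx
        obtain ⟨n, hn, rfl⟩ := hx
        exact hn.2
      · intro x hx
        have hxM : x ∈ M := by
          obtain ⟨y, hy, rfl⟩ := hx
          exact y.2
        obtain ⟨n, hn, rfl⟩ := hxM
        exact ⟨n, ⟨hn, hx⟩, rfl⟩
    rcases lt_or_eq_of_le (inf_le_left : L ≤ N) with hlt | heq
    · exfalso
      have hcen := hmin L hLnormal hlt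
      have : L.map π = ⊥ := by
        rw [Subgroup.map_eq_bot_iff, hπ, QuotientGroup.ker_mk']
        exact hcen
      rw [hLmap] at this
      have hSbot : (S : Subgroup M) = ⊥ :=
        Subgroup.map_eq_bot_iff_of_injective _ M.subtype_injective |>.mp this
      have hcard := Sylow.card_eq_multiplicity S
      rw [hSbot, Subgroup.card_bot] at hcard
      have hpos : 0 < (Nat.card M).factorization q :=
        Nat.Prime.factorization_pos_of_dvd hq Nat.card_pos.ne' hdvd
      have : 1 < q ^ (Nat.card M).factorization q :=
        Nat.one_lt_pow hpos.ne' hq.one_lt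
      omega
    · have hML : M = L.map π := by rw [hM, ← heq]
      rw [hML, hLmap]
      exact S.isPGroup'.map _
  -- M is nontrivial
  have hMne : Nat.card M ≠ 1 := by
    intro h
    apply hnc
    intro n hn
    have : π n = 1 := by
      have : M = ⊥ := Subgroup.eq_bot_of_card_eq _ h
      have hmem : π n ∈ M := ⟨n, hn, rfl⟩
      rw [this] at hmem
      simpa using hmem
    rwa [← QuotientGroup.ker_mk' (Subgroup.center G), MonoidHom.mem_ker]
  obtain ⟨r, hr, hrdvd⟩ := Nat.exists_prime_and_dvd hMne
  exact ⟨r, hr, key r hr hrdvd⟩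
end

section
/- Let r and p be distinct primes with p = 5, and let N be a subgroup of the diagonal torus (k^×)^5 ⊆ GL_5(k) (k algebraically closed of characteristic 5) that is stable under conjugation by the cyclic permutation matrix τ of order 5 and is not contained in the scalars. If every element x of N satisfies x^r ∈ scalars, then N contains a non-scalar element of order exactly r. -/
/-- Let `k` be algebraically closed of characteristic `5` and let `N` be a subgroup of the
diagonal torus `(kˣ)^5 ⊆ GL_5(k)` stable under the cyclic shift of coordinates (conjugation by
the 5-cycle permutation matrix `τ`), not contained in the scalars. If `r ≠ 5` is a prime and
`x ^ r` is scalar for every `x ∈ N`, then `N` contains a non-scalar element of order exactly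
`r`. -/
theorem torus_subgroup_has_order_r_element {k : Type*} [Field k] [IsAlgClosed k] [CharP k 5]
    {r : ℕ} (hr : r.Prime) (hr5 : r ≠ 5)
    (N : Subgroup (Fin 5 → kˣ))
    (hshift : ∀ x ∈ N, (fun i => x (i + 1)) ∈ N)
    (hns : ∃ x ∈ N, ¬ ∃ c : kˣ, ∀ i, x i = c)
    (hpow : ∀ x ∈ N, ∃ c : kˣ, ∀ i, x i ^ r = c) :
    ∃ x ∈ N, orderOf x = r ∧ ¬ ∃ c : kˣ, ∀ i, x i = c := by
  haveI : Fact (Nat.Prime 5) := ⟨by norm_num⟩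
  obtain ⟨x, hxN, hxns⟩ := hns
  set y : Fin 5 → kˣ := fun i => x (i + 1) * (x i)⁻¹ with hy
  have hyN : y ∈ N := N.mul_mem (hshift x hxN) (N.inv_mem hxN)
  obtain ⟨c, hc⟩ := hpow x hxN
  -- y is not scalar
  have hscal : ¬ ∃ d : kˣ, ∀ i, y i = d := by
    rintro ⟨d, hd⟩
    have e : ∀ i : Fin 5, x (i + 1) = d * x i := by
      intro i
      have := hd i
      simp only [hy] at this
      exact mul_inv_eq_iff_eq_mul.mp this
    have h5 : d ^ 5 * x 0 = x 0 := by
      have a0 : ((0 : Fin 5) + 1) = 1 := by decide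
      have a1 : ((1 : Fin 5) + 1) = 2 := by decide
      have a2 : ((2 : Fin 5) + 1) = 3 := by decide
      have a3 : ((3 : Fin 5) + 1) = 4 := by decide
      have a4 : ((4 : Fin 5) + 1) = 0 := by decide
      have e0 := e 0; have e1 := e 1; have e2 := e 2; have e3 := e 3; have e4 := e 4
      rw [a0] at e0; rw [a1] at e1; rw [a2] at e2; rw [a3] at e3; rw [a4] at e4
      calc d ^ 5 * x 0 = d * (d * (d * (d * (d * x 0)))) := by simp [pow_succ, mul_assoc, mul_comm, mul_left_comm]
        _ = d * (d * (d * (d * x 1))) := by rw [e0]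
        _ = d * (d * (d * x 2)) := by rw [e1]
        _ = d * (d * x 3) := by rw [e2]
        _ = d * x 4 := by rw [e3]
        _ = x 0 := e4.symm
    have hd5 : d ^ 5 = 1 := by
      have h5' : d ^ 5 * x 0 = 1 * x 0 := by rw [one_mul, h5]
      exact mul_right_cancel h5'
    have hd1 : d = 1 := by
      have hk : ((d : k) - 1) ^ 5 = 0 := by
        rw [sub_pow_char]
        have : ((d : k)) ^ 5 = 1 := by
          have := congrArg (Units.val) hd5
          simpa using this
        rw [this]; simp
      have : (d : k) - 1 = 0 := by
        exact pow_eq_zero_iff (by norm_num) |>.mp hk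
      have : (d : k) = 1 := by linear_combination this
      exact Units.ext (by simpa using this)
    apply hxns
    refine ⟨x 0, ?_⟩
    have e' : ∀ i : Fin 5, x (i + 1) = x i := by
      intro i; rw [e i, hd1, one_mul]
    have e0 := e' 0; have e1 := e' 1; have e2 := e' 2; have e3 := e' 3
    rw [show ((0 : Fin 5) + 1) = 1 by decide] at e0
    rw [show ((1 : Fin 5) + 1) = 2 by decide] at e1
    rw [show ((2 : Fin 5) + 1) = 3 by decide] at e2
    rw [show ((3 : Fin 5) + 1) = 4 by decide] at e3
    intro i
    fin_cases i
    · rfl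
    · exact e0
    · exact e1.trans e0
    · exact e2.trans (e1.trans e0)
    · exact e3.trans (e2.trans (e1.trans e0))
  have hyne : y ≠ 1 := by
    intro h
    exact hscal ⟨1, fun i => by rw [h]; rfl⟩
  have hyr : y ^ r = 1 := by
    funext i
    show y i ^ r = 1
    simp only [hy]
    rw [mul_pow, inv_pow, hc, hc]
    exact mul_inv_cancel _
  haveI : Fact (Nat.Prime r) := ⟨hr⟩
  exact ⟨y, hyN, orderOf_eq_prime hyr hyne, hscal⟩
end

section
/- Let r be a prime with r ≥ 7 and r ≢ 4 (mod 5). Regard F_r^5 as a representation of Z/5Z acting by cyclic permutation of coordinates. Then the complement of the trivial subrepresentation (the sum-zero hyperplane) is either irreducible or a direct sum of 4 pairwise distinct characters, and in either case it contains a vector all of whose 5 coordinates are pairwise distinct. -/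
/-- The cyclic shift endomorphism of `(ZMod r)^5`. -/
noncomputable def cyclicShift (r : ℕ) : (Fin 5 → ZMod r) →ₗ[ZMod r] (Fin 5 → ZMod r) :=
  LinearMap.funLeft (ZMod r) (ZMod r) (fun i => i + 1)

/-- The sum-zero hyperplane in `(ZMod r)^5`. -/
noncomputable def sumZero (r : ℕ) : Submodule (ZMod r) (Fin 5 → ZMod r) :=
  LinearMap.ker (∑ i : Fin 5, LinearMap.proj i)

/-!
On the sum-zero hyperplane `W` the shift `T` satisfies `1 + T + T² + T³ + T⁴ = 0`, i.e. `W` is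
annihilated by the cyclotomic polynomial `Φ₅`. If `r` is a primitive root mod 5 (`r ≡ 2, 3`),
`Φ₅` is irreducible over `𝔽_r`, so it is the minimal polynomial of `T` on every nonzero invariant
subspace of `W`, which therefore has dimension at least `deg Φ₅ = 4 = dim W`. If `r ≡ 1 mod 5`,
`𝔽_r` contains a primitive fifth root of unity `ζ`, and the geometric vectors `(ζ^(ij))ᵢ` for
`j = 1, …, 4` are eigenvectors of `T` with distinct eigenvalues spanning `W`. The vector
`(-2, -1, 0, 1, 2)` has distinct coordinates as soon as `r ≥ 5`.
-/

open Polynomial Module Fin.NatCast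

section InvariantSubspace

variable {K V : Type*} [Field K] [AddCommGroup V] [Module K V]

theorem Module.End.aeval_restrict_apply (T : Module.End K V) {U : Submodule K V}
    (hU : ∀ x ∈ U, T x ∈ U) (p : K[X]) (x : U) :
    (aeval (T.restrict hU) p x : V) = aeval T p x := by
  induction p using Polynomial.induction_on' with
  | add p q hp hq => simp [hp, hq]
  | monomial n a =>
    simp only [aeval_monomial, Module.End.mul_apply, Module.algebraMap_end_apply,
      SetLike.val_smul]
    rw [Module.End.pow_restrict]
    rfl

theorem natDegree_le_finrank_of_irreducible_of_aeval_eq_zero [FiniteDimensional K V]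
    [Nontrivial V] {T : Module.End K V} {Φ : K[X]} (hΦ : Irreducible Φ) (hT : aeval T Φ = 0) :
    Φ.natDegree ≤ finrank K V := by
  have hmin : Associated Φ (minpoly K T) :=
    (hΦ.dvd_iff.mp (minpoly.dvd K T hT)).resolve_left (minpoly.not_isUnit K T)
  rw [natDegree_eq_of_degree_eq (degree_eq_degree_of_associated hmin), ← T.charpoly_natDegree]
  exact natDegree_le_of_dvd T.minpoly_dvd_charpoly T.charpoly_monic.ne_zero

theorem Submodule.eq_bot_or_eq_of_le_of_aeval_eq_zero [FiniteDimensional K V]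
    {T : Module.End K V} {Φ : K[X]} (hΦ : Irreducible Φ) {W U : Submodule K V}
    (hW : finrank K W ≤ Φ.natDegree) (hΦW : ∀ w ∈ W, aeval T Φ w = 0) (hUW : U ≤ W)
    (hU : ∀ x ∈ U, T x ∈ U) : U = ⊥ ∨ U = W := by
  refine or_iff_not_imp_left.mpr fun hne => ?_
  have : Nontrivial U := Submodule.nontrivial_iff_ne_bot.mpr hne
  have hΦU : aeval (T.restrict hU) Φ = 0 := LinearMap.ext fun x => Subtype.ext <| by
    rw [Module.End.aeval_restrict_apply]
    exact hΦW x (hUW x.2)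
  exact Submodule.eq_of_le_of_finrank_le hUW
    (hW.trans (natDegree_le_finrank_of_irreducible_of_aeval_eq_zero hΦ hΦU))

end InvariantSubspace

section CyclicShift

variable {r : ℕ}

theorem mem_sumZero {u : Fin 5 → ZMod r} : u ∈ sumZero r ↔ ∑ i, u i = 0 := by
  simp [sumZero, LinearMap.sum_apply]

theorem finrank_sumZero [Fact r.Prime] : finrank (ZMod r) (sumZero r) = 4 := by
  have hne : (∑ i : Fin 5, LinearMap.proj i : (Fin 5 → ZMod r) →ₗ[ZMod r] ZMod r) ≠ 0 :=
    fun h => by simpa [LinearMap.sum_apply] using LinearMap.congr_fun h (Pi.single 0 1)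
  have := Module.Dual.finrank_ker_add_one_of_ne_zero hne
  simp only [finrank_fin_fun] at this
  exact Nat.succ_injective this

theorem cyclicShift_apply (u : Fin 5 → ZMod r) (i : Fin 5) : cyclicShift r u i = u (i + 1) :=
  rfl

theorem cyclicShift_pow_apply (n : ℕ) (u : Fin 5 → ZMod r) (i : Fin 5) :
    (cyclicShift r ^ n) u i = u (i + (n : Fin 5)) := by
  induction n generalizing u with
  | zero => simp
  | succ n ih =>
    rw [pow_succ, Module.End.mul_apply, ih, cyclicShift_apply, Nat.cast_succ, add_assoc]

theorem aeval_cyclotomic_cyclicShift_apply (u : Fin 5 → ZMod r) (i : Fin 5) :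
    aeval (cyclicShift r) (cyclotomic 5 (ZMod r)) u i = ∑ j, u j := by
  have : Fact (Nat.Prime 5) := ⟨Nat.prime_five⟩
  simp only [cyclotomic_prime, map_sum, map_pow, aeval_X, LinearMap.coe_sum, Finset.sum_apply,
    cyclicShift_pow_apply, ← Fin.sum_univ_eq_sum_range (fun k => u (i + k)), Fin.cast_val_eq_self]
  exact Equiv.sum_comp (Equiv.addLeft i) u

theorem aeval_cyclotomic_cyclicShift_of_mem_sumZero {u : Fin 5 → ZMod r} (hu : u ∈ sumZero r) :
    aeval (cyclicShift r) (cyclotomic 5 (ZMod r)) u = 0 :=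
  funext fun i => (aeval_cyclotomic_cyclicShift_apply u i).trans (mem_sumZero.mp hu)

theorem irreducible_cyclotomic_five [Fact r.Prime] (hr : r % 5 = 2 ∨ r % 5 = 3) :
    Irreducible (cyclotomic 5 (ZMod r)) := by
  have hr5 : ¬r ∣ 5 := fun h => by
    rcases Nat.prime_five.eq_one_or_self_of_dvd r h with rfl | rfl <;> omega
  refine ZMod.irreducible_of_dvd_cyclotomic_of_natDegree hr5 dvd_rfl ?_
  rw [natDegree_cyclotomic, Nat.totient_prime Nat.prime_five]
  -- `r` has order 4 in `(ZMod 5)ˣ` because `r² ≢ 1` and `r⁴ ≡ 1`.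
  refine (orderOf_eq_prime_pow (p := 2) (n := 1) ?_ ?_).symm <;>
    simp only [Units.ext_iff, Units.val_pow_eq_pow_val, ZMod.coe_unitOfCoprime, Units.val_one,
      ← ZMod.natCast_mod r 5] <;>
    rcases hr with h | h <;> rw [h] <;> decide

theorem eq_bot_or_eq_sumZero_of_map_cyclicShift_le [Fact r.Prime] (hr : r % 5 = 2 ∨ r % 5 = 3)
    {U : Submodule (ZMod r) (Fin 5 → ZMod r)} (hU : U ≤ sumZero r)
    (hT : U.map (cyclicShift r) ≤ U) : U = ⊥ ∨ U = sumZero r :=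
  Submodule.eq_bot_or_eq_of_le_of_aeval_eq_zero (irreducible_cyclotomic_five hr)
    (by rw [finrank_sumZero, natDegree_cyclotomic, Nat.totient_prime Nat.prime_five])
    (fun _ => aeval_cyclotomic_cyclicShift_of_mem_sumZero) hU
    (fun x hx => hT ⟨x, hx, rfl⟩)

def geomVector (ζ : ZMod r) : Fin 5 → ZMod r := fun i => ζ ^ (i : ℕ)

theorem cyclicShift_geomVector {ζ : ZMod r} (h : ζ ^ 5 = 1) :
    cyclicShift r (geomVector ζ) = ζ • geomVector ζ := by
  funext i
  simp only [cyclicShift_apply, geomVector, Pi.smul_apply, smul_eq_mul, Fin.val_add, Fin.val_one]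
  rw [← pow_eq_pow_mod _ h, pow_succ']

theorem geomVector_ne_zero [Fact r.Prime] (ζ : ZMod r) : geomVector ζ ≠ 0 :=
  fun h => one_ne_zero (α := ZMod r) (by simpa [geomVector] using congr_fun h 0)

theorem geomVector_mem_sumZero [Fact r.Prime] {ζ : ZMod r} (h : IsPrimitiveRoot ζ 5) :
    geomVector ζ ∈ sumZero r := by
  rw [mem_sumZero]
  simpa [geomVector, Fin.sum_univ_eq_sum_range] using h.geom_sum_eq_zero (by norm_num)

theorem exists_isPrimitiveRoot_five [Fact r.Prime] (hr : r % 5 = 1) :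
    ∃ ζ : ZMod r, IsPrimitiveRoot ζ 5 := by
  have : Fact (Nat.Prime 5) := ⟨Nat.prime_five⟩
  obtain ⟨g, hg⟩ :=
    exists_prime_orderOf_dvd_card (G := (ZMod r)ˣ) 5 (by rw [ZMod.card_units]; omega)
  exact ⟨(g : ZMod r), IsPrimitiveRoot.coe_units_iff.mpr (hg ▸ IsPrimitiveRoot.orderOf g)⟩

theorem exists_eigenbasis_sumZero [Fact r.Prime] (hr : r % 5 = 1) :
    ∃ (c : Fin 4 → ZMod r) (v : Fin 4 → (Fin 5 → ZMod r)),
      Function.Injective c ∧ (∀ j, v j ∈ sumZero r) ∧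
      LinearIndependent (ZMod r) v ∧ (∀ j, cyclicShift r (v j) = c j • v j) ∧
      Submodule.span (ZMod r) (Set.range v) = sumZero r := by
  obtain ⟨ζ, hζ⟩ := exists_isPrimitiveRoot_five hr
  set c : Fin 4 → ZMod r := fun j => ζ ^ ((j : ℕ) + 1)
  have hc : ∀ j, IsPrimitiveRoot (c j) 5 := fun j =>
    hζ.pow_of_coprime _ (Nat.Coprime.symm (Nat.prime_five.coprime_iff_not_dvd.mpr (by omega)))
  have hinj : Function.Injective c := fun i j h =>
    Fin.ext (by have := hζ.pow_inj (by omega) (by omega) h; omega)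
  have heig : ∀ j, cyclicShift r (geomVector (c j)) = c j • geomVector (c j) := fun j =>
    cyclicShift_geomVector (hc j).pow_eq_one
  have hli : LinearIndependent (ZMod r) fun j => geomVector (c j) :=
    Module.End.eigenvectors_linearIndependent' (cyclicShift r) c hinj _
      fun j => ⟨Module.End.mem_eigenspace_iff.mpr (heig j), geomVector_ne_zero _⟩
  have hmem : ∀ j, geomVector (c j) ∈ sumZero r := fun j => geomVector_mem_sumZero (hc j)
  refine ⟨c, fun j => geomVector (c j), hinj, hmem, hli, heig, ?_⟩
  refine Submodule.eq_of_le_of_finrank_le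
    (Submodule.span_le.mpr (Set.range_subset_iff.mpr hmem)) ?_
  rw [finrank_sumZero, finrank_span_eq_card hli, Fintype.card_fin]

theorem exists_injective_mem_sumZero (hr : 5 ≤ r) : ∃ w ∈ sumZero r, Function.Injective w := by
  refine ⟨fun i => ((i : ℕ) : ZMod r) - 2, ?_, fun i j h => Fin.ext ?_⟩
  · rw [mem_sumZero, Fin.sum_univ_five]
    change ((0 : ℕ) : ZMod r) - 2 + (((1 : ℕ) : ZMod r) - 2) + (((2 : ℕ) : ZMod r) - 2) +
      (((3 : ℕ) : ZMod r) - 2) + (((4 : ℕ) : ZMod r) - 2) = 0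
    push_cast
    ring
  · rw [sub_left_inj, ZMod.natCast_eq_natCast_iff', Nat.mod_eq_of_lt (by omega),
      Nat.mod_eq_of_lt (by omega)] at h
    exact h

end CyclicShift

/-- Let `r ≥ 7` be a prime with `r ≢ 4 (mod 5)`. For the action of `ℤ/5ℤ` on `F_r^5` by cyclic
permutation of coordinates, the sum-zero hyperplane (complement of the trivial subrepresentation)
is either irreducible or a direct sum of 4 pairwise distinct characters, and it contains a vector
with pairwise distinct coordinates. -/
theorem sum_zero_hyperplane_structure (r : ℕ) (hr : r.Prime) (hr7 : 7 ≤ r)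
    (hmod : r % 5 ≠ 4) :
    ((∀ U : Submodule (ZMod r) (Fin 5 → ZMod r), U ≤ sumZero r →
        U.map (cyclicShift r) ≤ U → U = ⊥ ∨ U = sumZero r) ∨
      (∃ (c : Fin 4 → ZMod r) (v : Fin 4 → (Fin 5 → ZMod r)),
        Function.Injective c ∧ (∀ j, v j ∈ sumZero r) ∧
        LinearIndependent (ZMod r) v ∧ (∀ j, cyclicShift r (v j) = c j • v j) ∧
        Submodule.span (ZMod r) (Set.range v) = sumZero r)) ∧
    ∃ w ∈ sumZero r, Function.Injective w := by
  have : Fact r.Prime := ⟨hr⟩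
  have hr5 : r % 5 ≠ 0 := fun h => by
    rcases hr.eq_one_or_self_of_dvd 5 (Nat.dvd_of_mod_eq_zero h) with h | h <;> omega
  refine ⟨?_, exists_injective_mem_sumZero (by omega)⟩
  rcases (by omega : r % 5 = 1 ∨ r % 5 = 2 ∨ r % 5 = 3) with h | h
  · exact Or.inr (exists_eigenbasis_sumZero h)
  · exact Or.inl fun U => eq_bot_or_eq_sumZero_of_map_cyclicShift_le h
end

section
/- Let r be a prime with r ≡ 4 (mod 5), so that F_{r^2} contains a primitive 5th root of unity ζ_5 not in F_r. For a ∈ F_{r^2}, let x(a) ∈ F_r^5 be the vector whose i-th coordinate is Tr_{F_{r^2}/F_r}(a·ζ_5^{i-1}). Then the coordinates of x(a) are pairwise distinct if and only if a ≠ 0 and a^r/a ∉ {1, ζ_5, ζ_5^2, ζ_5^3, ζ_5^4}. Moreover, since r ≡ 4 (mod 5), the multiplicative group of F_{r^2} has more than 5 norm-one elements (namely r+1 > 5 of them), hence there exists a with all coordinates of x(a) distinct. -/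
open Polynomial Finset

/-- Let `r ≡ 4 (mod 5)` be a prime, `K` a field with `r^2` elements and `ζ ∈ K` a primitive
5th root of unity. For `a ∈ K`, let `x(a) ∈ F_r^5` be the vector with `i`-th coordinate
`Tr(a ζ^i) = a ζ^i + (a ζ^i)^r`. Then the coordinates of `x(a)` are pairwise distinct iff
`a ≠ 0` and `a^r / a ∉ {1, ζ, ζ², ζ³, ζ⁴}`; moreover there are exactly `r + 1 > 5` norm-one
elements in `K`, and some `a` has all coordinates of `x(a)` distinct. -/
theorem trace_vector_distinct_coordinates (r : ℕ) (hr : r.Prime) (hmod : r % 5 = 4)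
    (K : Type*) [Field K] [Fintype K] (hK : Fintype.card K = r ^ 2)
    (ζ : K) (hζ : orderOf ζ = 5) :
    (∀ a : K,
      Function.Injective (fun i : Fin 5 => a * ζ ^ (i : ℕ) + (a * ζ ^ (i : ℕ)) ^ r) ↔
        (a ≠ 0 ∧ ∀ j : Fin 5, a ^ r / a ≠ ζ ^ (j : ℕ))) ∧
    Nat.card {u : K // u ^ (r + 1) = 1} = r + 1 ∧
    5 < Nat.card {u : K // u ^ (r + 1) = 1} ∧
    ∃ a : K,
      Function.Injective (fun i : Fin 5 => a * ζ ^ (i : ℕ) + (a * ζ ^ (i : ℕ)) ^ r) := by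
  classical
  have hr4 : r ≠ 4 := by rintro rfl; norm_num at hr
  have hr9 : 9 ≤ r := by
    rcases Nat.lt_or_ge r 9 with h | h
    · interval_cases r <;> simp_all
    · exact h
  have hz5 : ζ ^ 5 = 1 := by rw [← hζ]; exact pow_orderOf_eq_one ζ
  have hmod5 : ∀ m n : ℕ, m % 5 = n % 5 → ζ ^ m = ζ ^ n := by
    intro m n h
    rw [← Nat.div_add_mod m 5, ← Nat.div_add_mod n 5, h, pow_add, pow_add,
      pow_mul, pow_mul, hz5]
    simp
  have hprimζ : IsPrimitiveRoot ζ 5 := hζ ▸ IsPrimitiveRoot.orderOf ζ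
  have key : ∀ a : K, ∀ i : ℕ, (a * ζ ^ i) ^ r = a ^ r * ζ ^ (4 * i) := by
    intro a i
    rw [mul_pow, ← pow_mul, mul_comm i r]
    congr 1
    apply hmod5
    obtain ⟨q, hq⟩ : ∃ q, r = 5 * q + 4 := ⟨r / 5, by omega⟩
    rw [hq, show (5 * q + 4) * i = 5 * (q * i) + 4 * i by ring]
    generalize q * i = m
    omega
  -- Part 1
  have H : ∀ a : K,
      Function.Injective (fun i : Fin 5 => a * ζ ^ (i : ℕ) + (a * ζ ^ (i : ℕ)) ^ r) ↔
        (a ≠ 0 ∧ ∀ j : Fin 5, a ^ r / a ≠ ζ ^ (j : ℕ)) := by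
    intro a
    constructor
    · intro hinj
      have ha : a ≠ 0 := by
        rintro rfl
        have h01 : (0 : Fin 5) = 1 := @hinj 0 1 (by simp [zero_pow hr.ne_zero])
        exact absurd h01 (by decide)
      refine ⟨ha, fun j hj => ?_⟩
      rw [div_eq_iff ha] at hj
      have pairEq : ∀ jn c₁ c₂ : ℕ, (jn + 4 * c₁) % 5 = c₂ % 5 → (jn + 4 * c₂) % 5 = c₁ % 5 →
          a ^ r = ζ ^ jn * a →
          a * ζ ^ c₁ + (a * ζ ^ c₁) ^ r = a * ζ ^ c₂ + (a * ζ ^ c₂) ^ r := by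
        intro jn c₁ c₂ h1 h2 ha'
        rw [key, key, ha',
          show ζ ^ jn * a * ζ ^ (4 * c₁) = a * ζ ^ (jn + 4 * c₁) by rw [pow_add]; ring,
          show ζ ^ jn * a * ζ ^ (4 * c₂) = a * ζ ^ (jn + 4 * c₂) by rw [pow_add]; ring,
          hmod5 _ _ h1, hmod5 _ _ h2]
        ring
      fin_cases j
      · exact absurd (@hinj 1 4 (pairEq 0 1 4 (by norm_num) (by norm_num) hj)) (by decide)
      · exact absurd (@hinj 0 1 (pairEq 1 0 1 (by norm_num) (by norm_num) hj)) (by decide)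
      · exact absurd (@hinj 0 2 (pairEq 2 0 2 (by norm_num) (by norm_num) hj)) (by decide)
      · exact absurd (@hinj 1 2 (pairEq 3 1 2 (by norm_num) (by norm_num) hj)) (by decide)
      · exact absurd (@hinj 0 4 (pairEq 4 0 4 (by norm_num) (by norm_num) hj)) (by decide)
    · rintro ⟨ha, hj⟩ i₁ i₂ h
      by_contra hne
      simp only [key] at h
      set s : ℕ := ((i₁ : ℕ) + (i₂ : ℕ)) % 5 with hs
      have hzne : ζ ^ (i₁ : ℕ) ≠ ζ ^ (i₂ : ℕ) := fun hEq =>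
        hne (Fin.ext (hprimζ.pow_inj i₁.isLt i₂.isLt hEq))
      have e1 : ζ ^ (4 * (i₁ : ℕ)) * ζ ^ s = ζ ^ (i₂ : ℕ) := by
        rw [← pow_add]; apply hmod5; omega
      have e2 : ζ ^ (4 * (i₂ : ℕ)) * ζ ^ s = ζ ^ (i₁ : ℕ) := by
        rw [← pow_add]; apply hmod5; omega
      have step : (a ^ r - a * ζ ^ s) * (ζ ^ (i₂ : ℕ) - ζ ^ (i₁ : ℕ)) = 0 := by
        linear_combination ζ ^ s * h - a ^ r * e1 + a ^ r * e2
      rcases mul_eq_zero.1 step with h' | h'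
      · have hiden : a ^ r = a * ζ ^ s := by linear_combination h'
        refine hj ⟨s, by omega⟩ ?_
        rw [hiden, mul_comm, mul_div_assoc, div_self ha, mul_one]
      · exact hzne (sub_eq_zero.1 h').symm
  refine ⟨H, ?_⟩
  -- Part 2: count of norm-one elements
  have hsq : r ^ 2 - 1 = (r + 1) * (r - 1) := by
    have := Nat.sq_sub_sq r 1
    simpa using this
  obtain ⟨g, hg⟩ := IsCyclic.exists_generator (α := Kˣ)
  have hog : orderOf g = r ^ 2 - 1 := by
    rw [orderOf_eq_card_of_forall_mem_zpowers hg, Nat.card_eq_fintype_card, Fintype.card_units, hK]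
  have horder : orderOf (g ^ (r - 1)) = r + 1 := by
    rw [orderOf_pow, hog, hsq, Nat.gcd_eq_right (dvd_mul_left (r - 1) (r + 1)),
      Nat.mul_div_cancel _ (by omega : 0 < r - 1)]
  have horderK : orderOf ((g ^ (r - 1) : Kˣ) : K) = r + 1 := by
    rw [orderOf_units, horder]
  have hprim : IsPrimitiveRoot ((g ^ (r - 1) : Kˣ) : K) (r + 1) :=
    horderK ▸ IsPrimitiveRoot.orderOf _
  have hcount : Nat.card {u : K // u ^ (r + 1) = 1} = r + 1 := by
    rw [Nat.card_eq_fintype_card, Fintype.card_subtype]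
    refine Eq.trans ?_ hprim.card_nthRootsFinset
    congr 1
    ext x
    simp [Polynomial.mem_nthRootsFinset (show 0 < r + 1 by omega)]
  refine ⟨hcount, by omega, ?_⟩
  -- Part 4: existence
  by_contra hcon
  push_neg at hcon
  have hall : ∀ a : K, a = 0 ∨ ∃ j : Fin 5, a ^ r / a = ζ ^ (j : ℕ) := by
    intro a
    by_contra h'
    push_neg at h'
    exact hcon a ((H a).2 ⟨h'.1, h'.2⟩)
  set T : Finset K :=
    insert 0 ((Finset.range 5).biUnion fun j => (nthRoots (r - 1) (ζ ^ j)).toFinset) with hT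
  have hsub : (Finset.univ : Finset K) ⊆ T := by
    intro a _
    rcases hall a with rfl | ⟨j, hj⟩
    · exact Finset.mem_insert_self 0 _
    · have hζ0 : ζ ≠ 0 := fun h => by simp [h] at hz5
      by_cases ha : a = 0
      · exact ha ▸ Finset.mem_insert_self 0 _
      refine Finset.mem_insert_of_mem (Finset.mem_biUnion.2 ⟨(j : ℕ), Finset.mem_range.2 j.isLt, ?_⟩)
      rw [Multiset.mem_toFinset, Polynomial.mem_nthRoots (show 0 < r - 1 by omega)]
      rw [div_eq_iff ha] at hj
      have hpow : a ^ r = a ^ (r - 1) * a := by rw [← pow_succ]; congr 1; omega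
      rw [hpow] at hj
      exact mul_right_cancel₀ ha hj
  have hle : Fintype.card K ≤ T.card := Finset.card_le_card hsub
  have hTle : T.card ≤ 1 + 5 * (r - 1) := by
    refine le_trans (Finset.card_insert_le _ _) ?_
    have h1 : ((Finset.range 5).biUnion fun j => (nthRoots (r - 1) (ζ ^ j)).toFinset).card
        ≤ 5 * (r - 1) := by
      refine le_trans Finset.card_biUnion_le ?_
      refine le_trans (Finset.sum_le_sum fun j _ =>
        le_trans (Multiset.toFinset_card_le _) (Polynomial.card_nthRoots _ _)) ?_
      simp
    omega
  rw [hK] at hle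
  have h9 : 9 * r ≤ r ^ 2 := by rw [pow_two]; exact Nat.mul_le_mul_right r hr9
  have := le_trans h9 (le_trans hle hTle)
  omega
end
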